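/- arXiv:0806.0041 — 10 statements merged into one kernel-verified Lean document; each statement's English description precedes it below -/
import Mathlib

section
/- Let A, B, C be rings, ρ₁, ρ₂ : B → C and σ₁, σ₂ : A → B ring homomorphisms. If ρ₁ ≤ ρ₂ and σ₁ ≤ σ₂, then the composites satisfy ρ₁∘σ₁ ≤ ρ₂∘σ₂. -/
/-- `t` is an intertwiner from the ring homomorphism `α` to the ring homomorphism `β`:
an element `t ∈ B` with `t·α(a) = β(a)·t` for all `a ∈ A`. -/
def IsIntertwiner {A B : Type*} [Ring A] [Ring B] (α β : A →+* B) (t : B) : Prop :=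
  ∀ a : A, t * α a = β a * t

/-- `ρ ≤ σ` for parallel ring homomorphisms: there is a direct summand diagram, i.e.
intertwiners `b i : ρ → σ` and `a i : σ → ρ` with `∑ i, a i * b i = 1`. -/
def RingHomLE {A B : Type*} [Ring A] [Ring B] (ρ σ : A →+* B) : Prop :=
  ∃ (n : ℕ) (b a : Fin n → B),
    (∀ i, IsIntertwiner ρ σ (b i)) ∧ (∀ i, IsIntertwiner σ ρ (a i)) ∧
    (∑ i, a i * b i) = 1

/-!
Precomposing with `σ₁` gives `ρ₁ ∘ σ₁ ≤ ρ₂ ∘ σ₁`, and applying `ρ₂` to a direct summand diagram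
for `σ₁ ≤ σ₂` gives `ρ₂ ∘ σ₁ ≤ ρ₂ ∘ σ₂`. The relation `≤` is transitive: the products of the
intertwiners of two diagrams, indexed by pairs, form a diagram for the composite relation.
-/

namespace IsIntertwiner

variable {A B C Z : Type*} [Ring A] [Ring B] [Ring C] [Ring Z] {α β γ : A →+* B} {s t : B}

theorem mul (hs : IsIntertwiner β γ s) (ht : IsIntertwiner α β t) : IsIntertwiner α γ (s * t) :=
  fun x => by rw [mul_assoc, ht x, ← mul_assoc, hs x, mul_assoc]

theorem comp_right (ht : IsIntertwiner α β t) (f : Z →+* A) :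
    IsIntertwiner (α.comp f) (β.comp f) t :=
  fun z => ht (f z)

theorem map (ht : IsIntertwiner α β t) (ρ : B →+* C) :
    IsIntertwiner (ρ.comp α) (ρ.comp β) (ρ t) :=
  fun x => by simp only [RingHom.comp_apply, ← map_mul, ht x]

end IsIntertwiner

namespace RingHomLE

variable {A B C Z : Type*} [Ring A] [Ring B] [Ring C] [Ring Z] {ρ σ τ : A →+* B}

theorem of_fintype {ι : Type*} [Fintype ι] (b a : ι → B) (hb : ∀ i, IsIntertwiner ρ σ (b i))
    (ha : ∀ i, IsIntertwiner σ ρ (a i)) (hab : ∑ i, a i * b i = 1) : RingHomLE ρ σ := by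
  let e := Fintype.equivFin ι
  refine ⟨Fintype.card ι, b ∘ e.symm, a ∘ e.symm, fun _ => hb _, fun _ => ha _, ?_⟩
  rw [← hab, ← e.symm.sum_comp]
  rfl

theorem trans (h₁ : RingHomLE ρ σ) (h₂ : RingHomLE σ τ) : RingHomLE ρ τ := by
  obtain ⟨n, b, a, hb, ha, hab⟩ := h₁
  obtain ⟨m, d, c, hd, hc, hcd⟩ := h₂
  refine of_fintype (fun k : Fin n × Fin m => d k.2 * b k.1) (fun k => a k.1 * c k.2)
    (fun k => (hd k.2).mul (hb k.1)) (fun k => (ha k.1).mul (hc k.2)) ?_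
  have row_sum (i : Fin n) : ∑ j, a i * c j * (d j * b i) = a i * b i := by
    simp only [mul_assoc, ← Finset.mul_sum]
    simp only [← mul_assoc, ← Finset.sum_mul, hcd, mul_one]
  rw [Fintype.sum_prod_type]
  simp only [row_sum, hab]

theorem comp_right (h : RingHomLE ρ σ) (f : Z →+* A) : RingHomLE (ρ.comp f) (σ.comp f) := by
  obtain ⟨n, b, a, hb, ha, hab⟩ := h
  exact ⟨n, b, a, fun i => (hb i).comp_right f, fun i => (ha i).comp_right f, hab⟩

theorem comp_left (h : RingHomLE ρ σ) (φ : B →+* C) : RingHomLE (φ.comp ρ) (φ.comp σ) := by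
  obtain ⟨n, b, a, hb, ha, hab⟩ := h
  refine ⟨n, φ ∘ b, φ ∘ a, fun i => (hb i).map φ, fun i => (ha i).map φ, ?_⟩
  simp only [Function.comp_apply, ← map_mul, ← map_sum, hab, map_one]

end RingHomLE

/-- If `ρ₁ ≤ ρ₂` and `σ₁ ≤ σ₂` then `ρ₁∘σ₁ ≤ ρ₂∘σ₂`. -/
theorem stmt_1 {A B C : Type*} [Ring A] [Ring B] [Ring C]
    (ρ₁ ρ₂ : B →+* C) (σ₁ σ₂ : A →+* B)
    (h₁ : RingHomLE ρ₁ ρ₂) (h₂ : RingHomLE σ₁ σ₂) :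
    RingHomLE (ρ₁.comp σ₁) (ρ₂.comp σ₂) :=
  (h₁.comp_right σ₁).trans (h₂.comp_left ρ₂)
end

section
/- Let A and B be rings and let (m₁, e₁) : λ₁ ⊣ ρ₁ and (m₂, e₂) : λ₂ ⊣ ρ₂ be two adjunctions in the 2-category of rings, with λ₁, λ₂ : A → B and ρ₁, ρ₂ : B → A. Then λ₁ ≤ λ₂ if and only if ρ₁ ≤ ρ₂. -/
/-- `(m, e) : l ⊣ r` is an adjunction in the 2-category of rings. -/
def IsRingAdjunction {A B : Type*} [Ring A] [Ring B]
    (l : A →+* B) (r : B →+* A) (m : A) (e : B) : Prop :=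
  (∀ b : B, e * l (r b) = b * e) ∧ (∀ a : A, m * a = r (l a) * m) ∧
    r e * m = 1 ∧ e * l m = 1

/-!
Taking mates `t ↦ r₁ (e₂ t) m₁` sends intertwiners `l₁ → l₂` to intertwiners `r₂ → r₁`, reverses
composition and sends `1 : l₁ → l₁` to `1 : r₁ → r₁` (a triangle identity), so it carries a direct
summand diagram for `l₁ ≤ l₂` to one for `r₁ ≤ r₂`. The converse is the same argument in the opposite
rings, where an adjunction `l ⊣ r` becomes `rᵒᵖ ⊣ lᵒᵖ` and `≤` is unchanged.
-/

open MulOpposite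

section Mate

variable {A B : Type*} [Ring A] [Ring B]

def mate (r₁ : B →+* A) (m₁ : A) (e₂ : B) (t : B) : A :=
  r₁ (e₂ * t) * m₁

variable {l₁ l₂ : A →+* B} {r₁ r₂ : B →+* A} {m₁ m₂ : A} {e₁ e₂ : B}

theorem IsIntertwiner.mate (he₂ : ∀ b, e₂ * l₂ (r₂ b) = b * e₂)
    (hm₁ : ∀ a, m₁ * a = r₁ (l₁ a) * m₁) {t : B} (ht : IsIntertwiner l₁ l₂ t) :
    IsIntertwiner r₂ r₁ (mate r₁ m₁ e₂ t) := by
  intro b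
  calc r₁ (e₂ * t) * m₁ * r₂ b
      = r₁ (e₂ * (t * l₁ (r₂ b))) * m₁ := by
        rw [mul_assoc, hm₁, ← mul_assoc, ← map_mul, mul_assoc]
    _ = r₁ (e₂ * l₂ (r₂ b) * t) * m₁ := by rw [ht, mul_assoc]
    _ = r₁ b * (r₁ (e₂ * t) * m₁) := by rw [he₂, mul_assoc, map_mul, mul_assoc]

theorem mate_mul_mate (he₂ : ∀ b, e₂ * l₂ (r₂ b) = b * e₂)
    (hm₁ : ∀ a, m₁ * a = r₁ (l₁ a) * m₁) (hem₂ : e₂ * l₂ m₂ = 1)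
    {t : B} (ht : IsIntertwiner l₁ l₂ t) (u : B) :
    mate r₁ m₁ e₂ t * mate r₂ m₂ e₁ u = mate r₁ m₁ e₁ (u * t) := by
  unfold mate
  calc r₁ (e₂ * t) * m₁ * (r₂ (e₁ * u) * m₂)
      = r₁ (e₂ * (t * l₁ (r₂ (e₁ * u) * m₂))) * m₁ := by
        rw [mul_assoc, hm₁, ← mul_assoc, ← map_mul, mul_assoc]
    _ = r₁ (e₂ * l₂ (r₂ (e₁ * u)) * l₂ m₂ * t) * m₁ := by
        rw [ht, map_mul l₂, ← mul_assoc, ← mul_assoc]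
    _ = r₁ (e₁ * (u * t)) * m₁ := by
        rw [he₂, mul_assoc (e₁ * u), hem₂, mul_one, mul_assoc]

theorem mate_sum {ι : Type*} (s : Finset ι) (t : ι → B) :
    mate r₁ m₁ e₂ (∑ i ∈ s, t i) = ∑ i ∈ s, mate r₁ m₁ e₂ (t i) := by
  simp only [mate, Finset.mul_sum, map_sum, Finset.sum_mul]

theorem mate_one (h : r₁ e₁ * m₁ = 1) : mate r₁ m₁ e₁ 1 = 1 := by
  rwa [mate, mul_one]

theorem IsRingAdjunction.ringHomLE_of_ringHomLE_left (h₁ : IsRingAdjunction l₁ r₁ m₁ e₁)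
    (h₂ : IsRingAdjunction l₂ r₂ m₂ e₂) : RingHomLE l₁ l₂ → RingHomLE r₁ r₂ := by
  rintro ⟨n, b, a, hb, ha, hsum⟩
  refine ⟨n, fun i => mate r₂ m₂ e₁ (a i), fun i => mate r₁ m₁ e₂ (b i),
    fun i => (ha i).mate h₁.1 h₂.2.1, fun i => (hb i).mate h₂.1 h₁.2.1, ?_⟩
  calc ∑ i, mate r₁ m₁ e₂ (b i) * mate r₂ m₂ e₁ (a i)
      = mate r₁ m₁ e₁ (∑ i, a i * b i) := by
        simp only [mate_mul_mate h₂.1 h₁.2.1 h₂.2.2.2 (hb _), mate_sum]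
    _ = 1 := by rw [hsum, mate_one h₁.2.2.1]

end Mate

section Opposite

variable {A B : Type*} [Ring A] [Ring B]

theorem isIntertwiner_op_iff {α β : A →+* B} {t : B} :
    IsIntertwiner (RingHom.op α) (RingHom.op β) (op t) ↔ IsIntertwiner β α t := by
  simp only [IsIntertwiner, op_surjective.forall, RingHom.op_apply_apply, unop_op, ← op_mul,
    op_inj, eq_comm]

theorem ringHomLE_op_iff {α β : A →+* B} :
    RingHomLE (RingHom.op α) (RingHom.op β) ↔ RingHomLE α β := by
  constructor
  · rintro ⟨n, b, a, hb, ha, hsum⟩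
    refine ⟨n, fun i => unop (a i), fun i => unop (b i), fun i => ?_, fun i => ?_, ?_⟩
    · rw [← isIntertwiner_op_iff, op_unop]; exact ha i
    · rw [← isIntertwiner_op_iff, op_unop]; exact hb i
    · simpa using congr_arg unop hsum
  · rintro ⟨n, b, a, hb, ha, hsum⟩
    refine ⟨n, fun i => op (a i), fun i => op (b i), fun i => isIntertwiner_op_iff.2 (ha i),
      fun i => isIntertwiner_op_iff.2 (hb i), ?_⟩
    simpa using congr_arg op hsum

theorem IsRingAdjunction.op {l : A →+* B} {r : B →+* A} {m : A} {e : B}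
    (h : IsRingAdjunction l r m e) :
    IsRingAdjunction (RingHom.op r) (RingHom.op l) (op e) (op m) := by
  obtain ⟨he, hm, hre, hlm⟩ := h
  refine ⟨op_surjective.forall.2 fun a => ?_, op_surjective.forall.2 fun b => ?_, ?_, ?_⟩ <;>
    simp only [RingHom.op_apply_apply, unop_op, ← op_mul, op_eq_one_iff, hm, he, hre, hlm]

end Opposite

/-- For two adjunctions `λ₁ ⊣ ρ₁` and `λ₂ ⊣ ρ₂`, one has `λ₁ ≤ λ₂` iff `ρ₁ ≤ ρ₂`. -/
theorem stmt_3 {A B : Type*} [Ring A] [Ring B]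
    (l₁ l₂ : A →+* B) (r₁ r₂ : B →+* A) (m₁ m₂ : A) (e₁ e₂ : B)
    (h₁ : IsRingAdjunction l₁ r₁ m₁ e₁) (h₂ : IsRingAdjunction l₂ r₂ m₂ e₂) :
    RingHomLE l₁ l₂ ↔ RingHomLE r₁ r₂ := by
  refine ⟨h₁.ringHomLE_of_ringHomLE_left h₂, fun h => ?_⟩
  rw [← ringHomLE_op_iff] at h ⊢
  exact h₁.op.ringHomLE_of_ringHomLE_left h₂.op h
end

section
/- Let ρ, σ : A → B be parallel ring homomorphisms, R = Hom(ρ,ρ) and S = Hom(σ,σ) the intertwiner endomorphism rings (subrings of B), U = Hom(ρ,σ) the (S,R)-bimodule and V = Hom(σ,ρ) the (R,S)-bimodule, with all actions given by multiplication in B. If ρ ≤ σ, then V is finitely generated projective as a right S-module and U is finitely generated projective as a left S-module. -/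
/-!
A direct summand diagram `∑ aᵢ bᵢ = 1` is a finite dual basis. For `v ∈ Hom(σ,ρ)` each `bᵢ v`
lies in `S = Hom(σ,σ)` and `v = ∑ aᵢ (bᵢ v)`, so the `aᵢ` generate `V` as a right `S`-module
with coordinate functionals `v ↦ bᵢ v`; symmetrically `u = ∑ (u aᵢ) bᵢ` for `u ∈ Hom(ρ,σ)`.
A module with a finite dual basis is a direct summand of a finite free module.
-/

open MulOpposite

variable {A B : Type*} [Ring A] [Ring B]

/-- The additive group `Hom(α,β)` of intertwiners from `α` to `β`, as an additive
subgroup of `B`. -/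
def IntwGrp (α β : A →+* B) : AddSubgroup B where
  carrier := {t | IsIntertwiner α β t}
  add_mem' := by
    intro x y hx hy a
    simp only [add_mul, mul_add, hx a, hy a]
  zero_mem' := by intro a; simp
  neg_mem' := by
    intro x hx a
    simp only [neg_mul, mul_neg, hx a]

theorem mem_IntwGrp {α β : A →+* B} {t : B} :
    t ∈ IntwGrp α β ↔ IsIntertwiner α β t := Iff.rfl

/-- The intertwiner endomorphism ring `Hom(σ,σ)` as a subring of `B`. -/
def EndSubring (σ : A →+* B) : Subring B where
  carrier := {t | IsIntertwiner σ σ t}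
  mul_mem' := by
    intro x y hx hy a
    rw [mul_assoc, hy a, ← mul_assoc, hx a, mul_assoc]
  one_mem' := by intro a; rw [one_mul, mul_one]
  add_mem' := by
    intro x y hx hy a
    simp only [add_mul, mul_add, hx a, hy a]
  zero_mem' := by intro a; simp
  neg_mem' := by
    intro x hx a
    simp only [neg_mul, mul_neg, hx a]

theorem mem_EndSubring {σ : A →+* B} {t : B} :
    t ∈ EndSubring σ ↔ IsIntertwiner σ σ t := Iff.rfl

/-- `V = Hom(σ,ρ)` is a right module (i.e. a module over the opposite ring) over
`S = Hom(σ,σ)`, by multiplication in `B`. -/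
instance (σ ρ : A →+* B) : SMul (EndSubring σ)ᵐᵒᵖ (IntwGrp σ ρ) :=
  ⟨fun s v => ⟨(v : B) * (s.unop : B), by
    intro a
    rw [mul_assoc, (s.unop).2 a, ← mul_assoc, v.2 a, mul_assoc]⟩⟩

theorem opSmul_def (σ ρ : A →+* B) (s : (EndSubring σ)ᵐᵒᵖ) (v : IntwGrp σ ρ) :
    ((s • v : IntwGrp σ ρ) : B) = (v : B) * (s.unop : B) := rfl

instance (σ ρ : A →+* B) : Module (EndSubring σ)ᵐᵒᵖ (IntwGrp σ ρ) where
  one_smul v := by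
    apply Subtype.ext
    simp [opSmul_def]
  mul_smul s t v := by
    apply Subtype.ext
    simp [opSmul_def, mul_assoc]
  smul_zero s := by
    apply Subtype.ext
    simp [opSmul_def]
  smul_add s v w := by
    apply Subtype.ext
    simp [opSmul_def, add_mul]
  add_smul s t v := by
    apply Subtype.ext
    simp [opSmul_def, mul_add]
  zero_smul v := by
    apply Subtype.ext
    simp [opSmul_def]

/-- `U = Hom(ρ,σ)` is a left module over `S = Hom(σ,σ)`, by multiplication in `B`. -/
instance (σ ρ : A →+* B) : SMul (EndSubring σ) (IntwGrp ρ σ) :=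
  ⟨fun s u => ⟨(s : B) * (u : B), by
    intro a
    rw [mul_assoc, u.2 a, ← mul_assoc, s.2 a, mul_assoc]⟩⟩

theorem smul_def (σ ρ : A →+* B) (s : EndSubring σ) (u : IntwGrp ρ σ) :
    ((s • u : IntwGrp ρ σ) : B) = (s : B) * (u : B) := rfl

instance (σ ρ : A →+* B) : Module (EndSubring σ) (IntwGrp ρ σ) where
  one_smul u := by
    apply Subtype.ext
    simp [smul_def]
  mul_smul s t u := by
    apply Subtype.ext
    simp [smul_def, mul_assoc]
  smul_zero s := by
    apply Subtype.ext
    simp [smul_def]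
  smul_add s u w := by
    apply Subtype.ext
    simp [smul_def, mul_add]
  add_smul s t u := by
    apply Subtype.ext
    simp [smul_def, add_mul]
  zero_smul u := by
    apply Subtype.ext
    simp [smul_def]

theorem Module.finite_and_projective_of_sum_smul_eq_self {R M ι : Type*} [Semiring R]
    [AddCommMonoid M] [Module R M] [Fintype ι] (v : ι → M) (φ : ι → M →ₗ[R] R)
    (h : ∀ m, ∑ i, φ i m • v i = m) :
    Module.Finite R M ∧ Module.Projective R M := by
  let g := Fintype.linearCombination R v
  have hsplit : g ∘ₗ LinearMap.pi φ = LinearMap.id := LinearMap.ext h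
  exact ⟨Module.Finite.of_surjective g fun m => ⟨LinearMap.pi φ m, h m⟩,
    Module.Projective.of_split _ _ hsplit⟩

theorem IsIntertwiner.mul_s4 {α β γ : A →+* B} {s t : B} (hs : IsIntertwiner β γ s)
    (ht : IsIntertwiner α β t) : IsIntertwiner α γ (s * t) := fun x => by
  rw [mul_assoc, ht x, ← mul_assoc, hs x, mul_assoc]

namespace IntwGrp

variable {ρ σ : A →+* B}

def mulLeft (b : IntwGrp ρ σ) : IntwGrp σ ρ →ₗ[(EndSubring σ)ᵐᵒᵖ] (EndSubring σ)ᵐᵒᵖ where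
  toFun v := op ⟨b * v, IsIntertwiner.mul_s4 b.2 v.2⟩
  map_add' _ _ := unop_injective <| Subtype.ext <| mul_add _ _ _
  map_smul' _ _ := unop_injective <| Subtype.ext <| (mul_assoc _ _ _).symm

def mulRight (a : IntwGrp σ ρ) : IntwGrp ρ σ →ₗ[EndSubring σ] EndSubring σ where
  toFun u := ⟨u * a, IsIntertwiner.mul_s4 u.2 a.2⟩
  map_add' _ _ := Subtype.ext <| add_mul _ _ _
  map_smul' _ _ := Subtype.ext <| mul_assoc _ _ _

theorem finite_and_projective_op (h : RingHomLE ρ σ) :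
    Module.Finite (EndSubring σ)ᵐᵒᵖ (IntwGrp σ ρ) ∧
      Module.Projective (EndSubring σ)ᵐᵒᵖ (IntwGrp σ ρ) := by
  obtain ⟨n, b, a, hb, ha, hsum⟩ := h
  refine Module.finite_and_projective_of_sum_smul_eq_self (fun i => ⟨a i, ha i⟩)
    (fun i => mulLeft ⟨b i, hb i⟩) fun v => Subtype.ext ?_
  rw [AddSubmonoidClass.coe_finsetSum]
  calc ∑ i, a i * (b i * v) = (∑ i, a i * b i) * v := by
        simp only [Finset.sum_mul, mul_assoc]
    _ = v := by rw [hsum, one_mul]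

theorem finite_and_projective (h : RingHomLE ρ σ) :
    Module.Finite (EndSubring σ) (IntwGrp ρ σ) ∧
      Module.Projective (EndSubring σ) (IntwGrp ρ σ) := by
  obtain ⟨n, b, a, hb, ha, hsum⟩ := h
  refine Module.finite_and_projective_of_sum_smul_eq_self (fun i => ⟨b i, hb i⟩)
    (fun i => mulRight ⟨a i, ha i⟩) fun u => Subtype.ext ?_
  rw [AddSubmonoidClass.coe_finsetSum]
  calc ∑ i, u * a i * b i = u * ∑ i, a i * b i := by
        simp only [Finset.mul_sum, mul_assoc]
    _ = u := by rw [hsum, mul_one]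

end IntwGrp

/-- If `ρ ≤ σ` then `V = Hom(σ,ρ)` is finitely generated projective as a right
`S`-module and `U = Hom(ρ,σ)` is finitely generated projective as a left `S`-module,
where `S = Hom(σ,σ)`. -/
theorem stmt_4 (ρ σ : A →+* B) (h : RingHomLE ρ σ) :
    (Module.Finite (EndSubring σ)ᵐᵒᵖ (IntwGrp σ ρ) ∧
      Module.Projective (EndSubring σ)ᵐᵒᵖ (IntwGrp σ ρ)) ∧
    (Module.Finite (EndSubring σ) (IntwGrp ρ σ) ∧
      Module.Projective (EndSubring σ) (IntwGrp ρ σ)) :=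
  ⟨IntwGrp.finite_and_projective_op h, IntwGrp.finite_and_projective h⟩
end

section
/- Let I be a small category with binary coproducts and X : I → AddCommGrp an additive-group-valued functor. If c is a cocone over X whose image under the forgetful functor to Set is a colimit cocone of the underlying Set-valued functor, then c itself is a colimit cocone in the category of abelian groups. Equivalently, the forgetful functor from abelian groups to sets creates colimits of shape I. -/
/-!
Because `I` has binary coproducts, any two elements of a colimit of sets over `I` come from
a common stage: push `a ∈ F i` and `b ∈ F j` into `F (i ⨿ j)`. On a colimit of underlying sets
of abelian groups this lets one define `ι a + ι b := ι (inl a + inr b)`; independence of the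
representatives is obtained by descending twice through the universal property, and every group
axiom involves at most three elements, hence can be checked inside a single group `X i`. The same
observation shows that the map of sets induced by a cocone of groups is additive, so the
forgetful functor also reflects these colimits. Finally `I` is nonempty because the colimit set
contains `0`.
-/

open CategoryTheory CategoryTheory.Limits

universe u v

namespace CategoryTheory.Functor.CoconeTypes.IsColimit

variable {I : Type*} [Category* I] [HasBinaryCoproducts I] {F : I ⥤ Type*} {c : F.CoconeTypes}
  (hc : c.IsColimit)
include hc

lemma exists_eq_ι_pair (x y : c.pt) : ∃ i a b, c.ι i a = x ∧ c.ι i b = y := by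
  obtain ⟨i, a, rfl⟩ := hc.ι_jointly_surjective x
  obtain ⟨j, b, rfl⟩ := hc.ι_jointly_surjective y
  exact ⟨i ⨿ j, F.map coprod.inl a, F.map coprod.inr b, by simp, by simp⟩

lemma exists_eq_ι_triple (x y z : c.pt) :
    ∃ i a b d, c.ι i a = x ∧ c.ι i b = y ∧ c.ι i d = z := by
  obtain ⟨i, a, b, rfl, rfl⟩ := hc.exists_eq_ι_pair x y
  obtain ⟨j, d, rfl⟩ := hc.ι_jointly_surjective z
  exact ⟨i ⨿ j, F.map coprod.inl a, F.map coprod.inl b, F.map coprod.inr d, by simp, by simp,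
    by simp⟩

end CategoryTheory.Functor.CoconeTypes.IsColimit

namespace AddCommGrpCat

variable {I : Type*} [Category* I] {K : I ⥤ AddCommGrpCat.{v}}

section

variable (c : (K ⋙ forget AddCommGrpCat).CoconeTypes)

lemma ι_map {i j : I} (f : i ⟶ j) (a : K.obj i) : c.ι j (K.map f a) = c.ι i a :=
  c.ι_naturality_apply f a

end

section

variable {c : (K ⋙ forget AddCommGrpCat).CoconeTypes} (hc : c.IsColimit)

noncomputable def colimNeg : c.pt → c.pt :=
  hc.desc
    { pt := c.pt
      ι i (a : K.obj i) := c.ι i (-a)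
      ι_naturality f := funext fun a =>
        (congrArg (c.ι _) (map_neg (K.map f).hom a)).symm.trans (ι_map c f (-a)) }

lemma colimNeg_ι {i : I} (a : K.obj i) : colimNeg hc (c.ι i a) = c.ι i (-a) :=
  hc.fac_apply _ i a

end

variable [HasBinaryCoproducts I]

section

variable (c : (K ⋙ forget AddCommGrpCat).CoconeTypes)

lemma ι_zero_eq (i j : I) : c.ι i (0 : K.obj i) = c.ι j (0 : K.obj j) := by
  rw [← ι_map c (coprod.inl : i ⟶ i ⨿ j), ← ι_map c (coprod.inr : j ⟶ i ⨿ j), map_zero,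
    map_zero]

noncomputable def ιCoprodAdd {i j : I} (a : K.obj i) (b : K.obj j) : c.pt :=
  c.ι (i ⨿ j) (K.map coprod.inl a + K.map coprod.inr b)

lemma ιCoprodAdd_map {i i' j j' : I} (f : i ⟶ i') (g : j ⟶ j') (a : K.obj i) (b : K.obj j) :
    ιCoprodAdd c (K.map f a) (K.map g b) = ιCoprodAdd c a b := by
  rw [ιCoprodAdd, ιCoprodAdd, ← ι_map c (coprod.map f g), map_add]
  congr 1
  simp only [← Functor.map_comp_apply, coprod.inl_map, coprod.inr_map]

lemma ιCoprodAdd_self {i : I} (a b : K.obj i) : ιCoprodAdd c a b = c.ι i (a + b) := by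
  rw [ιCoprodAdd, ← ι_map c (coprod.desc (𝟙 i) (𝟙 i)), map_add, ← Functor.map_comp_apply,
    ← Functor.map_comp_apply, coprod.inl_desc, coprod.inr_desc, K.map_id, id_apply,
    id_apply]

end

section

variable {c : (K ⋙ forget AddCommGrpCat).CoconeTypes} (hc : c.IsColimit)

noncomputable def colimAdd : c.pt → c.pt → c.pt :=
  hc.desc
    { pt := c.pt → c.pt
      ι i a := hc.desc
        { pt := c.pt
          ι j b := ιCoprodAdd c a b
          ι_naturality g := funext fun b => by simpa using ιCoprodAdd_map c (𝟙 _) g a b }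
      ι_naturality f := funext fun a => hc.funext fun j => funext fun b => by
        simpa using ιCoprodAdd_map c f (𝟙 _) a b }

lemma colimAdd_ι_ι_self {i : I} (a b : K.obj i) :
    colimAdd hc (c.ι i a) (c.ι i b) = c.ι i (a + b) := by
  simp [colimAdd, ιCoprodAdd_self]

lemma colimAdd_assoc (x y z : c.pt) :
    colimAdd hc (colimAdd hc x y) z = colimAdd hc x (colimAdd hc y z) := by
  -- ascribed to `K.obj i`, so that its group lemmas apply syntactically
  obtain ⟨i, (a : K.obj i), (b : K.obj i), (d : K.obj i), rfl, rfl, rfl⟩ :=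
    hc.exists_eq_ι_triple x y z
  simp only [colimAdd_ι_ι_self, add_assoc]

lemma colimAdd_comm (x y : c.pt) : colimAdd hc x y = colimAdd hc y x := by
  obtain ⟨i, (a : K.obj i), (b : K.obj i), rfl, rfl⟩ := hc.exists_eq_ι_pair x y
  rw [colimAdd_ι_ι_self, colimAdd_ι_ι_self, add_comm]

lemma colimAdd_ι_zero_left (j : I) (x : c.pt) : colimAdd hc (c.ι j (0 : K.obj j)) x = x := by
  obtain ⟨i, (a : K.obj i), rfl⟩ := hc.ι_jointly_surjective x
  rw [ι_zero_eq c j i, colimAdd_ι_ι_self, zero_add]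

lemma colimNeg_add_cancel (j : I) (x : c.pt) :
    colimAdd hc (colimNeg hc x) x = c.ι j (0 : K.obj j) := by
  obtain ⟨i, (a : K.obj i), rfl⟩ := hc.ι_jointly_surjective x
  rw [colimNeg_ι, colimAdd_ι_ι_self, neg_add_cancel, ι_zero_eq c i j]

noncomputable abbrev colimAddCommGroup [Nonempty I] : AddCommGroup c.pt :=
  letI : Add c.pt := ⟨colimAdd hc⟩
  letI : Zero c.pt := ⟨c.ι (Classical.arbitrary I) (0 : K.obj _)⟩
  letI : Neg c.pt := ⟨colimNeg hc⟩
  { AddGroup.ofLeftAxioms (colimAdd_assoc hc) (colimAdd_ι_zero_left hc _)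
      (colimNeg_add_cancel hc _) with
    add_comm := colimAdd_comm hc }

noncomputable def liftedCocone [Nonempty I] : Cocone K :=
  letI := colimAddCommGroup hc
  { pt := of c.pt
    ι :=
      { app i := ofHom (AddMonoidHom.mk' (c.ι i) fun a b => (colimAdd_ι_ι_self hc a b).symm)
        naturality _ _ f := by
          ext a
          exact ι_map c f a } }

end

noncomputable def isColimitOfIsColimitMapCoconeForget {c : Cocone K}
    (hc : IsColimit ((forget AddCommGrpCat).mapCocone c)) : IsColimit c :=
  have hc' := (Types.isColimit_iff_coconeTypesIsColimit _).1 ⟨hc⟩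
  IsColimit.ofFaithful (forget AddCommGrpCat) hc
    (fun s => ofHom (AddMonoidHom.mk' (hc.desc ((forget AddCommGrpCat).mapCocone s)) fun x y => by
      obtain ⟨i, (a : K.obj i), (b : K.obj i), rfl, rfl⟩ := hc'.exists_eq_ι_pair x y
      let d : c.pt → s.pt := hc.desc ((forget AddCommGrpCat).mapCocone s)
      have hfac (z : K.obj i) : d (c.ι.app i z) = s.ι.app i z := types_congr_hom (hc.fac _ i) z
      change d (c.ι.app i a + c.ι.app i b) = d (c.ι.app i a) + d (c.ι.app i b)
      rw [← map_add, hfac, hfac, hfac, map_add]))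
    fun _ => rfl

instance : ReflectsColimitsOfShape I (forget AddCommGrpCat.{v}) where
  reflectsColimit := ⟨fun hc => ⟨isColimitOfIsColimitMapCoconeForget hc⟩⟩

noncomputable instance [Nonempty I] : CreatesColimitsOfShape I (forget AddCommGrpCat.{v}) where
  CreatesColimit :=
    { lifts t ht :=
        { liftedCocone := liftedCocone ((Types.isColimit_iff_coconeTypesIsColimit t).1 ⟨ht⟩)
          validLift := Cocone.ext (Iso.refl _) fun _ => rfl } }

end AddCommGrpCat

/-- Let `I` be a small category with binary coproducts and `X : I ⥤ AddCommGrp`.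
If `c` is a cocone over `X` whose image under the forgetful functor to `Set` is a
colimit cocone, then `c` is itself a colimit cocone in `AddCommGrp`; equivalently,
the forgetful functor from abelian groups to sets creates colimits of shape `I`. -/
theorem stmt_8 (I : Type u) [SmallCategory I] [HasBinaryCoproducts I]
    (X : I ⥤ AddCommGrpCat.{v}) (c : Cocone X)
    (h : IsColimit ((forget AddCommGrpCat.{v}).mapCocone c)) :
    Nonempty (IsColimit c) ∧
      Nonempty (CreatesColimitsOfShape I (forget AddCommGrpCat.{v})) := by
  obtain ⟨i, -⟩ := Types.jointly_surjective_of_isColimit h (0 : c.pt)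
  have : Nonempty I := ⟨i⟩
  exact ⟨⟨isColimitOfReflects _ h⟩, ⟨inferInstance⟩⟩
end

section
/- Let (γ, d, e) be a comonoid in the endomorphism category of a ring B. Then: (i) the operation b₁ ⋆ b₂ = b₁·γ(b₂)·d is associative on B with two-sided unit e, so B_γ = (B, ⋆, e) is a ring; (ii) ρ_γ : B → B_γ, b ↦ b·e, is a ring homomorphism; (iii) λ_γ : B_γ → B, b ↦ γ(b)·d, is a ring homomorphism; (iv) λ_γ(ρ_γ(b)) = γ(b) for all b ∈ B; (v) the element m = 1_B of B_γ and the element e of B form the unit and counit of an adjunction λ_γ ⊣ ρ_γ in the 2-category of rings, i.e. ρ_γ(λ_γ(b')) ⋆ m = m ⋆ b' for all b' ∈ B_γ, e·λ_γ(ρ_γ(b)) = b·e for all b ∈ B, ρ_γ(e) ⋆ m = e, and e·λ_γ(m) = 1_B. -/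
/-! Every identity is a short computation in `B`: the intertwining law `d·γ(b) = γ²(b)·d` moves
`d` to the right, coassociativity `γ(d)·d = d·d` merges the two copies of `d` created by `⋆`,
and the counit laws `e·d = γ(e)·d = 1` cancel whatever `e` has been absorbed. -/

variable {B : Type*} [Ring B]

/-- `(γ, d, e)` is a comonoid in the endomorphism category of the ring `B`:
`d : γ → γ²` and `e : γ → id` are intertwiners satisfying coassociativity and
the counit laws. -/
def IsComonoid (γ : B →+* B) (d e : B) : Prop :=
  (∀ b : B, d * γ b = γ (γ b) * d) ∧ (∀ b : B, e * γ b = b * e) ∧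
    γ d * d = d * d ∧ e * d = 1 ∧ γ e * d = 1

/-- The Kleisli multiplication `b₁ ⋆ b₂ = b₁·γ(b₂)·d` on `B`. -/
def kstar (γ : B →+* B) (d b₁ b₂ : B) : B := b₁ * γ b₂ * d

section Kleisli

variable {γ : B →+* B} {d e : B}

theorem kstar_one_left (b : B) : kstar γ d 1 b = γ b * d := by
  rw [kstar, one_mul]

theorem kstar_one_right (b : B) : kstar γ d b 1 = b * d := by
  rw [kstar, map_one, mul_one]

theorem kstar_add_left (b₁ b₂ b₃ : B) :
    kstar γ d (b₁ + b₂) b₃ = kstar γ d b₁ b₃ + kstar γ d b₂ b₃ := by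
  simp only [kstar, add_mul]

theorem kstar_add_right (b₁ b₂ b₃ : B) :
    kstar γ d b₁ (b₂ + b₃) = kstar γ d b₁ b₂ + kstar γ d b₁ b₃ := by
  simp only [kstar, map_add, mul_add, add_mul]

theorem kstar_assoc (hd : ∀ b : B, d * γ b = γ (γ b) * d) (hcoassoc : γ d * d = d * d)
    (b₁ b₂ b₃ : B) :
    kstar γ d (kstar γ d b₁ b₂) b₃ = kstar γ d b₁ (kstar γ d b₂ b₃) := by
  simp only [kstar, map_mul]
  calc b₁ * γ b₂ * d * γ b₃ * d = b₁ * γ b₂ * (d * γ b₃) * d := by noncomm_ring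
    _ = b₁ * γ b₂ * γ (γ b₃) * (γ d * d) := by rw [hd, hcoassoc]; noncomm_ring
    _ = b₁ * (γ b₂ * γ (γ b₃) * γ d) * d := by noncomm_ring

theorem kstar_counit_left (he : ∀ b : B, e * γ b = b * e) (hed : e * d = 1) (b : B) :
    kstar γ d e b = b := by
  rw [kstar, he, mul_assoc, hed, mul_one]

theorem kstar_counit_right (hed : γ e * d = 1) (b : B) : kstar γ d b e = b := by
  rw [kstar, mul_assoc, hed, mul_one]

theorem kstar_mul_right_mul_right (he : ∀ b : B, e * γ b = b * e) (hed : e * d = 1)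
    (b₁ b₂ : B) : kstar γ d (b₁ * e) (b₂ * e) = b₁ * b₂ * e := by
  calc kstar γ d (b₁ * e) (b₂ * e) = b₁ * (e * γ (b₂ * e)) * d := by
        rw [kstar, mul_assoc b₁]
    _ = b₁ * b₂ * e * (e * d) := by rw [he]; noncomm_ring
    _ = b₁ * b₂ * e := by rw [hed, mul_one]

theorem map_kstar_mul (hd : ∀ b : B, d * γ b = γ (γ b) * d) (hcoassoc : γ d * d = d * d)
    (b₁ b₂ : B) : γ (kstar γ d b₁ b₂) * d = γ b₁ * d * (γ b₂ * d) := by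
  simp only [kstar, map_mul]
  calc γ b₁ * γ (γ b₂) * γ d * d = γ b₁ * γ (γ b₂) * (γ d * d) := by noncomm_ring
    _ = γ b₁ * (d * γ b₂) * d := by rw [hcoassoc, hd]; noncomm_ring
    _ = γ b₁ * d * (γ b₂ * d) := by noncomm_ring

theorem map_mul_right_mul (hed : γ e * d = 1) (b : B) : γ (b * e) * d = γ b := by
  rw [map_mul, mul_assoc, hed, mul_one]

end Kleisli

/-- For a comonoid `(γ, d, e)` in the endomorphism category of `B`:
(i) `⋆` is associative with two-sided unit `e` (and distributes over addition), so
`B_γ = (B, ⋆, e)` is a ring; (ii) `ρ_γ : b ↦ b·e` is a ring homomorphism `B → B_γ`;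
(iii) `λ_γ : b ↦ γ(b)·d` is a ring homomorphism `B_γ → B`; (iv) `λ_γ∘ρ_γ = γ`;
(v) `m = 1_B ∈ B_γ` and `e ∈ B` are the unit and counit of an adjunction `λ_γ ⊣ ρ_γ`. -/
theorem stmt_10 (γ : B →+* B) (d e : B) (h : IsComonoid γ d e) :
    -- (i) `B_γ = (B, ⋆, e)` is a ring
    (∀ b₁ b₂ b₃ : B, kstar γ d (kstar γ d b₁ b₂) b₃ = kstar γ d b₁ (kstar γ d b₂ b₃)) ∧
    (∀ b : B, kstar γ d e b = b ∧ kstar γ d b e = b) ∧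
    (∀ b₁ b₂ b₃ : B, kstar γ d b₁ (b₂ + b₃) = kstar γ d b₁ b₂ + kstar γ d b₁ b₃) ∧
    (∀ b₁ b₂ b₃ : B, kstar γ d (b₁ + b₂) b₃ = kstar γ d b₁ b₃ + kstar γ d b₂ b₃) ∧
    -- (ii) `ρ_γ : b ↦ b·e` is a ring homomorphism `B → B_γ`
    (∀ b₁ b₂ : B, (b₁ * b₂) * e = kstar γ d (b₁ * e) (b₂ * e)) ∧
    ((1 : B) * e = e) ∧
    -- (iii) `λ_γ : b ↦ γ(b)·d` is a ring homomorphism `B_γ → B`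
    (∀ b₁ b₂ : B, γ (kstar γ d b₁ b₂) * d = (γ b₁ * d) * (γ b₂ * d)) ∧
    (γ e * d = 1) ∧
    -- (iv) `λ_γ(ρ_γ(b)) = γ(b)`
    (∀ b : B, γ (b * e) * d = γ b) ∧
    -- (v) the adjunction `λ_γ ⊣ ρ_γ` with unit `m = 1_B` and counit `e`
    (∀ b' : B, kstar γ d ((γ b' * d) * e) 1 = kstar γ d 1 b') ∧
    (∀ b : B, e * (γ (b * e) * d) = b * e) ∧
    (kstar γ d (e * e) 1 = e) ∧
    (e * (γ 1 * d) = 1) := by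
  obtain ⟨hd, he, hcoassoc, hed, hγed⟩ := h
  refine ⟨kstar_assoc hd hcoassoc,
    fun b => ⟨kstar_counit_left he hed b, kstar_counit_right hγed b⟩, kstar_add_right,
    kstar_add_left, fun b₁ b₂ => (kstar_mul_right_mul_right he hed b₁ b₂).symm,
    one_mul e, map_kstar_mul hd hcoassoc, hγed, map_mul_right_mul hγed, fun b' => ?_,
    fun b => by rw [map_mul_right_mul hγed, he], ?_, by rw [map_one, one_mul, hed]⟩
  · rw [kstar_one_right, kstar_one_left, mul_assoc, hed, mul_one]
  · rw [kstar_one_right, mul_assoc, hed, mul_one]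
end

section
/- Let ρ : B → A be a ring homomorphism and suppose f : B → A is an additive bijection satisfying f(b'·b) = ρ(b')·f(b) for all b, b' ∈ B (an isomorphism of left B-modules, where B acts on A via ρ). Set m = f(1_B), e = f⁻¹(1_A), and define λ : A → B by λ(a) = f⁻¹(m·a). Then λ is a ring homomorphism, (m, e) is the unit and counit of an adjunction λ ⊣ ρ in the 2-category of rings, and f(b) = ρ(b)·m for all b ∈ B. -/
/-! Since `f` is `B`-linear, `f b = f (b • 1) = ρ b * m`, so `f` is right multiplication by
`m`, and `f⁻¹` is `B`-linear as well. Then `f (λ(a) · λ(a')) = ρ (λ a) * m * a' = m * a * a'`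
gives multiplicativity of `λ`, and `ρ e * m = f e = 1` shows that left multiplication by `e`
turns `λ` back into `f⁻¹`; both remaining adjunction identities reduce to this. -/

structure RingHom.IsAdjunction {A B : Type*} [Ring A] [Ring B]
    (l : A →+* B) (r : B →+* A) (m : A) (e : B) : Prop where
  counit : ∀ b : B, e * l (r b) = b * e
  unit : ∀ a : A, m * a = r (l a) * m
  left_triangle : r e * m = 1
  right_triangle : e * l m = 1

namespace AddEquiv

variable {A B : Type*} [Ring A] [Ring B] {ρ : B →+* A} {f : B ≃+ A}

theorem apply_eq_map_mul_apply_one (hf : ∀ b b' : B, f (b' * b) = ρ b' * f b) (b : B) :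
    f b = ρ b * f 1 := by
  simpa using hf 1 b

theorem symm_map_mul (hf : ∀ b b' : B, f (b' * b) = ρ b' * f b) (b : B) (a : A) :
    f.symm (ρ b * a) = b * f.symm a :=
  f.symm_apply_eq.2 (by rw [hf, f.apply_symm_apply])

theorem mul_apply_one_eq_map_symm_mul (hf : ∀ b b' : B, f (b' * b) = ρ b' * f b) (a : A) :
    f 1 * a = ρ (f.symm (f 1 * a)) * f 1 := by
  rw [← apply_eq_map_mul_apply_one hf, f.apply_symm_apply]

def leftAdjoint (hf : ∀ b b' : B, f (b' * b) = ρ b' * f b) : A →+* B where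
  toFun a := f.symm (f 1 * a)
  map_one' := by rw [mul_one, f.symm_apply_apply]
  map_mul' a a' :=
    calc f.symm (f 1 * (a * a')) = f.symm (ρ (f.symm (f 1 * a)) * (f 1 * a')) := by
          rw [← mul_assoc, ← mul_assoc, ← mul_apply_one_eq_map_symm_mul hf]
      _ = f.symm (f 1 * a) * f.symm (f 1 * a') := symm_map_mul hf _ _
  map_zero' := by rw [mul_zero, map_zero]
  map_add' a a' := by rw [mul_add, map_add]

theorem leftAdjoint_apply (hf : ∀ b b' : B, f (b' * b) = ρ b' * f b) (a : A) :
    f.leftAdjoint hf a = f.symm (f 1 * a) :=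
  rfl

theorem map_symm_one_mul_apply_one (hf : ∀ b b' : B, f (b' * b) = ρ b' * f b) :
    ρ (f.symm 1) * f 1 = 1 := by
  rw [← apply_eq_map_mul_apply_one hf, f.apply_symm_apply]

theorem symm_one_mul_leftAdjoint (hf : ∀ b b' : B, f (b' * b) = ρ b' * f b) (a : A) :
    f.symm 1 * f.leftAdjoint hf a = f.symm a := by
  rw [leftAdjoint_apply, ← symm_map_mul hf, ← mul_assoc, map_symm_one_mul_apply_one hf, one_mul]

theorem isAdjunction_leftAdjoint (hf : ∀ b b' : B, f (b' * b) = ρ b' * f b) :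
    (f.leftAdjoint hf).IsAdjunction ρ (f 1) (f.symm 1) where
  counit b := by rw [symm_one_mul_leftAdjoint hf, ← mul_one (ρ b), symm_map_mul hf]
  unit := mul_apply_one_eq_map_symm_mul hf
  left_triangle := map_symm_one_mul_apply_one hf
  right_triangle := by rw [symm_one_mul_leftAdjoint hf, f.symm_apply_apply]

end AddEquiv

/-- Let `ρ : B → A` be a ring homomorphism and `f : B → A` an additive bijection
with `f(b'·b) = ρ(b')·f(b)` (an isomorphism of left `B`-modules `B ≅ A`). Setting
`m = f(1)`, `e = f⁻¹(1)` and `λ(a) = f⁻¹(m·a)`, the map `λ` is a ring homomorphism,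
`(m, e)` is the unit and counit of an adjunction `λ ⊣ ρ` in the 2-category of rings,
and `f(b) = ρ(b)·m` for all `b`. -/
theorem stmt_12 {A B : Type*} [Ring A] [Ring B]
    (ρ : B →+* A) (f : B ≃+ A) (hf : ∀ b b' : B, f (b' * b) = ρ b' * f b) :
    -- `λ : a ↦ f⁻¹(m·a)` is a ring homomorphism
    (∀ a a' : A, f.symm (f 1 * (a * a')) = f.symm (f 1 * a) * f.symm (f 1 * a')) ∧
    (f.symm (f 1 * 1) = 1) ∧
    (∀ a a' : A, f.symm (f 1 * (a + a')) = f.symm (f 1 * a) + f.symm (f 1 * a')) ∧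
    -- `e = f⁻¹(1)` is a counit intertwiner `λ∘ρ → id_B`
    (∀ b : B, f.symm 1 * f.symm (f 1 * ρ b) = b * f.symm 1) ∧
    -- `m = f(1)` is a unit intertwiner `id_A → ρ∘λ`
    (∀ a : A, f 1 * a = ρ (f.symm (f 1 * a)) * f 1) ∧
    -- triangle identities
    (ρ (f.symm 1) * f 1 = 1) ∧
    (f.symm 1 * f.symm (f 1 * f 1) = 1) ∧
    -- `f(b) = ρ(b)·m`
    (∀ b : B, f b = ρ b * f 1) := by
  let l := f.leftAdjoint hf
  have adj := f.isAdjunction_leftAdjoint hf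
  exact ⟨l.map_mul, l.map_one, l.map_add, adj.counit, adj.unit, adj.left_triangle,
    adj.right_triangle, f.apply_eq_map_mul_apply_one hf⟩
end

section
/- For a ring homomorphism ρ : B → A the following conditions are equivalent: (i) ρ is right adjoint in the 2-category of rings, i.e. there exist a ring homomorphism λ : A → B and elements m ∈ A, e ∈ B forming an adjunction λ ⊣ ρ; (ii) A is isomorphic to B as a left B-module, i.e. there exists an additive bijection f : B → A with f(b'·b) = ρ(b')·f(b) for all b, b' ∈ B. -/
section

variable {A B : Type*} [Ring A] [Ring B] {ρ : B →+* A}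

namespace IsRingAdjunction

variable {l : A →+* B} {m : A} {e : B}

def addEquiv (h : IsRingAdjunction l ρ m e) : B ≃+ A where
  toFun b := ρ b * m
  invFun a := e * l a
  left_inv b := by
    obtain ⟨he, -, -, hel⟩ := h
    calc e * l (ρ b * m) = e * l (ρ b) * l m := by rw [map_mul, mul_assoc]
      _ = b := by rw [he b, mul_assoc, hel, mul_one]
  right_inv a := by
    obtain ⟨-, hm, hrm, -⟩ := h
    calc ρ (e * l a) * m = ρ e * (ρ (l a) * m) := by rw [map_mul, mul_assoc]
      _ = a := by rw [← hm a, ← mul_assoc, hrm, one_mul]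
  map_add' b b' := by simp only [map_add, add_mul]

theorem addEquiv_apply (h : IsRingAdjunction l ρ m e) (b : B) : h.addEquiv b = ρ b * m := rfl

theorem addEquiv_mul (h : IsRingAdjunction l ρ m e) (b b' : B) :
    h.addEquiv (b' * b) = ρ b' * h.addEquiv b := by
  simp only [addEquiv_apply, map_mul, mul_assoc]

end IsRingAdjunction

section OfAddEquiv

variable (f : B ≃+ A)

theorem apply_eq_map_mul_apply_one (hf : ∀ b b' : B, f (b' * b) = ρ b' * f b) (b : B) :
    f b = ρ b * f 1 := by
  simpa using hf 1 b

theorem map_symm_mul_apply_one (hf : ∀ b b' : B, f (b' * b) = ρ b' * f b) (a : A) :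
    ρ (f.symm a) * f 1 = a := by
  rw [← apply_eq_map_mul_apply_one f hf, f.apply_symm_apply]

variable (hf : ∀ b b' : B, f (b' * b) = ρ b' * f b)

def leftAdjointOfAddEquiv : A →+* B where
  toFun a := f.symm (f 1 * a)
  map_one' := by rw [mul_one, f.symm_apply_apply]
  map_mul' a a' := by
    apply f.injective
    rw [hf, f.apply_symm_apply, f.apply_symm_apply, ← mul_assoc (ρ _),
      map_symm_mul_apply_one f hf, mul_assoc]
  map_zero' := by rw [mul_zero, map_zero]
  map_add' a a' := by rw [mul_add, map_add]

theorem leftAdjointOfAddEquiv_apply (a : A) :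
    leftAdjointOfAddEquiv f hf a = f.symm (f 1 * a) := rfl

theorem isRingAdjunction_leftAdjointOfAddEquiv :
    IsRingAdjunction (leftAdjointOfAddEquiv f hf) ρ (f 1) (f.symm 1) := by
  have hunit : ∀ a, f 1 * a = ρ (leftAdjointOfAddEquiv f hf a) * f 1 := fun a => by
    rw [leftAdjointOfAddEquiv_apply, map_symm_mul_apply_one f hf]
  have htriangle : ρ (f.symm 1) * f 1 = 1 := map_symm_mul_apply_one f hf 1
  refine ⟨fun b => f.injective ?_, hunit, htriangle, f.injective ?_⟩
  · rw [hf, hf, leftAdjointOfAddEquiv_apply, f.apply_symm_apply, f.apply_symm_apply, ← mul_assoc,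
      htriangle, one_mul, mul_one]
  · rw [hf, leftAdjointOfAddEquiv_apply, f.apply_symm_apply, ← mul_assoc, htriangle, one_mul]

end OfAddEquiv

end

/-- For a ring homomorphism `ρ : B → A` the following are equivalent:
(i) `ρ` is right adjoint in the 2-category of rings;
(ii) `A ≅ B` as left `B`-modules, i.e. there is an additive bijection `f : B → A`
with `f(b'·b) = ρ(b')·f(b)`. -/
theorem stmt_13 {A B : Type*} [Ring A] [Ring B] (ρ : B →+* A) :
    (∃ (l : A →+* B) (m : A) (e : B), IsRingAdjunction l ρ m e) ↔
      (∃ f : B ≃+ A, ∀ b b' : B, f (b' * b) = ρ b' * f b) := by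
  constructor
  · rintro ⟨l, m, e, h⟩
    exact ⟨h.addEquiv, h.addEquiv_mul⟩
  · rintro ⟨f, hf⟩
    exact ⟨_, _, _, isRingAdjunction_leftAdjointOfAddEquiv f hf⟩
end

section
/- Let (m, e) : λ ⊣ ρ be an adjunction in the 2-category of rings, with λ : A → B and ρ : B → A. Regard A as a right B-module via a·b = a·ρ(b) and as a left B-module via b·a = ρ(b)·a, and form the tensor product A ⊗_B A. Then the additive map ϑ : A ⊗_B A → A determined by ϑ(a' ⊗ a) = a'·ρ(e·λ(a)) is bijective with inverse a ↦ a ⊗ m; moreover ϑ is left A-linear (ϑ(a''·a' ⊗ a) = a''·ϑ(a' ⊗ a)) and satisfies ϑ(a' ⊗ a·ρ(b)) = ϑ(a' ⊗ a)·ρ(λ(ρ(b))) for all a, a', a'' ∈ A and b ∈ B. -/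
open TensorProduct

/-- The subgroup of `A ⊗_ℤ A` generated by the balancing relations for the tensor
product `A ⊗_B A` over `B`, with the right `B`-action `a·b = a·ρ(b)` and the left
`B`-action `b·a = ρ(b)·a` on `A`. -/
noncomputable def balancedRel {A B : Type*} [Ring A] [Ring B] (ρ : B →+* A) :
    AddSubgroup (A ⊗[ℤ] A) :=
  AddSubgroup.closure
    {z | ∃ (a' a : A) (b : B), z = (a' * ρ b) ⊗ₜ[ℤ] a - a' ⊗ₜ[ℤ] (ρ b * a)}

/-!
The map `a' ⊗ a ↦ a'·ρ(e·λ(a))` is balanced because `e·λ(ρ(b)·a) = b·e·λ(a)`. The triangle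
identity `e·λ(m) = 1` makes `a ↦ a ⊗ m` a right inverse. Conversely,
`a'·ρ(e·λ(a)) ⊗ m = a' ⊗ ρ(e·λ(a))·m` by balancing, and `ρ(e·λ(a))·m = ρ(e)·m·a = a` by
naturality of the unit and the other triangle identity.
-/

section Balanced

variable {A B : Type*} [Ring A] [Ring B] (r : B →+* A)

theorem mk_mul_tmul_eq_mk_tmul_mul (a' a : A) (b : B) :
    (QuotientAddGroup.mk ((a' * r b) ⊗ₜ[ℤ] a) : (A ⊗[ℤ] A) ⧸ balancedRel r) =
      QuotientAddGroup.mk (a' ⊗ₜ[ℤ] (r b * a)) := by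
  rw [QuotientAddGroup.eq, neg_add_eq_sub, ← neg_sub]
  exact neg_mem (AddSubgroup.subset_closure ⟨a', a, b, rfl⟩)

theorem balancedRel_le_ker {M : Type*} [AddCommGroup M] {φ : A ⊗[ℤ] A →+ M}
    (hφ : ∀ (a' a : A) (b : B), φ ((a' * r b) ⊗ₜ[ℤ] a) = φ (a' ⊗ₜ[ℤ] (r b * a))) :
    balancedRel r ≤ φ.ker := by
  rw [balancedRel, AddSubgroup.closure_le]
  rintro _ ⟨a', a, b, rfl⟩
  rw [SetLike.mem_coe, AddMonoidHom.mem_ker, map_sub, hφ, sub_self]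

end Balanced

section MulRightTensor

variable {A : Type*} [Ring A]

noncomputable def mulRightTensor (f : A →+ A) : A ⊗[ℤ] A →+ A :=
  ((LinearMap.mul' ℤ A).comp (LinearMap.lTensor A f.toIntLinearMap)).toAddMonoidHom

@[simp]
theorem mulRightTensor_tmul (f : A →+ A) (a' a : A) :
    mulRightTensor f (a' ⊗ₜ[ℤ] a) = a' * f a := by
  simp [mulRightTensor]

end MulRightTensor

namespace IsRingAdjunction

variable {A B : Type*} [Ring A] [Ring B] {l : A →+* B} {r : B →+* A} {m : A} {e : B}

theorem counit_mul_map_mul (h : IsRingAdjunction l r m e) (b : B) (a : A) :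
    e * l (r b * a) = b * (e * l a) := by
  rw [map_mul, ← mul_assoc, h.1 b, mul_assoc]

theorem map_counit_mul_map_mul_unit (h : IsRingAdjunction l r m e) (a : A) :
    r (e * l a) * m = a := by
  rw [map_mul, mul_assoc, ← h.2.1 a, ← mul_assoc, h.2.2.1, one_mul]

variable (l r e) in
def counitEndo : A →+ A := (r : B →+ A).comp ((AddMonoidHom.mulLeft e).comp l)

@[simp]
theorem counitEndo_apply (a : A) : counitEndo l r e a = r (e * l a) := rfl

theorem counitEndo_map_mul (h : IsRingAdjunction l r m e) (b : B) (a : A) :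
    counitEndo l r e (r b * a) = r b * counitEndo l r e a := by
  rw [counitEndo_apply, counitEndo_apply, h.counit_mul_map_mul, map_mul]

noncomputable def tensorEquiv (h : IsRingAdjunction l r m e) :
    ((A ⊗[ℤ] A) ⧸ balancedRel r) ≃+ A where
  toFun := QuotientAddGroup.lift _ (mulRightTensor (counitEndo l r e)) <|
    balancedRel_le_ker r fun a' a b => by
      rw [mulRightTensor_tmul, mulRightTensor_tmul, h.counitEndo_map_mul, mul_assoc]
  invFun a := QuotientAddGroup.mk (a ⊗ₜ[ℤ] m)
  left_inv x := by
    induction x using QuotientAddGroup.induction_on with | H x => ?_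
    induction x using TensorProduct.induction_on with
    | zero => simp
    | tmul a' a =>
      show QuotientAddGroup.mk ((a' * r (e * l a)) ⊗ₜ[ℤ] m) = _
      rw [mk_mul_tmul_eq_mk_tmul_mul, h.map_counit_mul_map_mul_unit]
    | add x y hx hy => simp_all [add_tmul]
  right_inv a := by simp [h.2.2.2]
  map_add' := map_add _

@[simp]
theorem tensorEquiv_mk_tmul (h : IsRingAdjunction l r m e) (a' a : A) :
    h.tensorEquiv (QuotientAddGroup.mk (a' ⊗ₜ[ℤ] a)) = a' * r (e * l a) :=
  mulRightTensor_tmul _ a' a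

theorem tensorEquiv_symm_apply (h : IsRingAdjunction l r m e) (a : A) :
    h.tensorEquiv.symm a = QuotientAddGroup.mk (a ⊗ₜ[ℤ] m) :=
  rfl

end IsRingAdjunction

/-- For an adjunction `(m, e) : λ ⊣ ρ` in the 2-category of rings, the map
`ϑ : A ⊗_B A → A` determined by `ϑ(a' ⊗ a) = a'·ρ(e·λ(a))` is an additive bijection
with inverse `a ↦ a ⊗ m`; moreover it is left `A`-linear and satisfies
`ϑ(a' ⊗ a·ρ(b)) = ϑ(a' ⊗ a)·ρ(λ(ρ(b)))`. Here `A ⊗_B A` is realized as the quotient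
of `A ⊗_ℤ A` by the balancing relations. -/
theorem stmt_15 {A B : Type*} [Ring A] [Ring B]
    (l : A →+* B) (r : B →+* A) (m : A) (e : B) (h : IsRingAdjunction l r m e) :
    ∃ θ : ((A ⊗[ℤ] A) ⧸ balancedRel r) ≃+ A,
      (∀ a' a : A,
        θ (QuotientAddGroup.mk (a' ⊗ₜ[ℤ] a)) = a' * r (e * l a)) ∧
      (∀ a : A, θ.symm a = QuotientAddGroup.mk (a ⊗ₜ[ℤ] m)) ∧
      (∀ a'' a' a : A,
        θ (QuotientAddGroup.mk ((a'' * a') ⊗ₜ[ℤ] a)) =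
          a'' * θ (QuotientAddGroup.mk (a' ⊗ₜ[ℤ] a))) ∧
      (∀ (a' a : A) (b : B),
        θ (QuotientAddGroup.mk (a' ⊗ₜ[ℤ] (a * r b))) =
          θ (QuotientAddGroup.mk (a' ⊗ₜ[ℤ] a)) * r (l (r b))) := by
  refine ⟨h.tensorEquiv, h.tensorEquiv_mk_tmul, h.tensorEquiv_symm_apply,
    fun a'' a' a => ?_, fun a' a b => ?_⟩
  · simp only [h.tensorEquiv_mk_tmul, mul_assoc]
  · simp only [h.tensorEquiv_mk_tmul, map_mul, mul_assoc]
end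

section
/- Let (m, e) : λ ⊣ ρ be an adjunction in the 2-category of rings, with λ : A → B and ρ : B → A. Let End(ρ∘λ) = {h ∈ A | h·ρ(λ(a)) = ρ(λ(a))·h for all a ∈ A} and Hom(ρ∘λ∘ρ, ρ) = {t ∈ A | t·ρ(λ(ρ(b))) = ρ(b)·t for all b ∈ B}. Then the map h ↦ ρ(e)·h is an additive bijection from End(ρ∘λ) onto Hom(ρ∘λ∘ρ, ρ), with inverse t ↦ t·ρ(λ(m)). -/
namespace RingHom

variable {A B C D : Type*} [Ring A] [Ring B] [Ring C] [Ring D]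

def twoCells (f g : A →+* C) : Set C :=
  {t | ∀ a, t * f a = g a * t}

theorem mul_mem_twoCells {f g k : A →+* C} {s t : C} (hs : s ∈ twoCells g k)
    (ht : t ∈ twoCells f g) : s * t ∈ twoCells f k := fun a => by
  rw [mul_assoc, ht a, ← mul_assoc, hs a, mul_assoc]

theorem map_mem_twoCells_comp {f g : A →+* C} {t : C} (ht : t ∈ twoCells f g) (k : C →+* D) :
    k t ∈ twoCells (k.comp f) (k.comp g) := fun a => by
  simp only [coe_comp, Function.comp_apply, ← map_mul, ht a]

theorem mem_twoCells_comp {f g : A →+* C} {t : C} (ht : t ∈ twoCells f g) (k : B →+* A) :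
    t ∈ twoCells (f.comp k) (g.comp k) := fun b => ht (k b)

end RingHom

namespace IsRingAdjunction

open RingHom

variable {A B : Type*} [Ring A] [Ring B] {l : A →+* B} {r : B →+* A} {m : A} {e : B}

theorem counit_mem_twoCells (h : IsRingAdjunction l r m e) :
    e ∈ twoCells (l.comp r) (RingHom.id B) :=
  h.1

theorem unit_mem_twoCells (h : IsRingAdjunction l r m e) :
    m ∈ twoCells (RingHom.id A) (r.comp l) :=
  h.2.1

theorem counit_mul_mem_twoCells (h : IsRingAdjunction l r m e) {x : A}
    (hx : x ∈ twoCells (r.comp l) (r.comp l)) :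
    r e * x ∈ twoCells (r.comp (l.comp r)) r :=
  mul_mem_twoCells (map_mem_twoCells_comp h.counit_mem_twoCells r) (mem_twoCells_comp hx r)

theorem mul_unit_mem_twoCells (h : IsRingAdjunction l r m e) {t : A}
    (ht : t ∈ twoCells (r.comp (l.comp r)) r) :
    t * r (l m) ∈ twoCells (r.comp l) (r.comp l) :=
  mul_mem_twoCells (mem_twoCells_comp ht l)
    (map_mem_twoCells_comp h.unit_mem_twoCells (r.comp l))

theorem counit_mul_mul_unit (h : IsRingAdjunction l r m e) {x : A}
    (hx : x ∈ twoCells (r.comp l) (r.comp l)) :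
    r e * x * r (l m) = x := by
  have hxm : x * r (l m) = r (l m) * x := hx m
  rw [mul_assoc, hxm, ← mul_assoc, ← map_mul, h.2.2.2, map_one, one_mul]

theorem counit_mul_mul_unit' (h : IsRingAdjunction l r m e) {t : A}
    (ht : t ∈ twoCells (r.comp (l.comp r)) r) :
    r e * (t * r (l m)) = t := by
  have hte : t * r (l (r e)) = r e * t := ht e
  rw [← mul_assoc, ← hte, mul_assoc, ← map_mul, ← map_mul, h.2.2.1, map_one, map_one, mul_one]

end IsRingAdjunction

/-- For an adjunction `(m, e) : λ ⊣ ρ` in the 2-category of rings, the map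
`h ↦ ρ(e)·h` is an additive bijection from `End(ρ∘λ)` onto `Hom(ρ∘λ∘ρ, ρ)`,
with inverse `t ↦ t·ρ(λ(m))`. -/
theorem stmt_17 {A B : Type*} [Ring A] [Ring B]
    (l : A →+* B) (r : B →+* A) (m : A) (e : B) (h : IsRingAdjunction l r m e) :
    (∀ h₁ h₂ : A, r e * (h₁ + h₂) = r e * h₁ + r e * h₂) ∧
    Set.BijOn (fun x : A => r e * x)
      {x : A | ∀ a : A, x * r (l a) = r (l a) * x}
      {t : A | ∀ b : B, t * r (l (r b)) = r b * t} ∧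
    Set.InvOn (fun t : A => t * r (l m)) (fun x : A => r e * x)
      {x : A | ∀ a : A, x * r (l a) = r (l a) * x}
      {t : A | ∀ b : B, t * r (l (r b)) = r b * t} := by
  have inv : Set.InvOn (fun t : A => t * r (l m)) (fun x : A => r e * x)
      (RingHom.twoCells (r.comp l) (r.comp l)) (RingHom.twoCells (r.comp (l.comp r)) r) :=
    ⟨fun _ hx => h.counit_mul_mul_unit hx, fun _ ht => h.counit_mul_mul_unit' ht⟩
  exact ⟨fun h₁ h₂ => mul_add _ _ _,
    inv.bijOn (fun _ => h.counit_mul_mem_twoCells) (fun _ => h.mul_unit_mem_twoCells), inv⟩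
end

section
/- Let (m, e) : λ ⊣ ρ be an adjunction in the 2-category of rings, with λ : A → B and ρ : B → A, and suppose id_B ≤ λ∘ρ, witnessed by elements v_1,…,v_n ∈ Hom(id_B, λ∘ρ) and w_1,…,w_n ∈ Hom(λ∘ρ, id_B) with Σ_k w_k·v_k = 1_B. Then the additive map E : A → B defined by E(a) = Σ_k w_k·λ(a)·v_k satisfies E(ρ(b)·a·ρ(b')) = b·E(a)·b' for all a ∈ A and b, b' ∈ B, and E(1_A) = 1_B; in particular E(ρ(b)) = b for all b ∈ B, so ρ : B → A is a split extension of B-B-bimodules. -/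
section Intertwiner

variable {A B : Type*} [Ring A] [Ring B] {l : A →+* B} {r : B →+* A}

theorem IsIntertwiner.mul_map_comp {w : B} (hw : IsIntertwiner (l.comp r) (RingHom.id B) w)
    (b : B) : w * l (r b) = b * w :=
  hw b

theorem IsIntertwiner.map_comp_mul {v : B} (hv : IsIntertwiner (RingHom.id B) (l.comp r) v)
    (b : B) : l (r b) * v = v * b :=
  (hv b).symm

theorem IsIntertwiner.mul_map_sandwich_mul {v w : B}
    (hv : IsIntertwiner (RingHom.id B) (l.comp r) v)
    (hw : IsIntertwiner (l.comp r) (RingHom.id B) w) (a : A) (b b' : B) :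
    w * l (r b * a * r b') * v = b * (w * l a * v) * b' := calc
  w * l (r b * a * r b') * v = (w * l (r b)) * l a * (l (r b') * v) := by
    simp only [map_mul, mul_assoc]
  _ = b * (w * l a * v) * b' := by
    rw [hw.mul_map_comp, hv.map_comp_mul]
    simp only [mul_assoc]

theorem sum_mul_map_sandwich_mul {n : ℕ} {v w : Fin n → B}
    (hv : ∀ k, IsIntertwiner (RingHom.id B) (l.comp r) (v k))
    (hw : ∀ k, IsIntertwiner (l.comp r) (RingHom.id B) (w k)) (a : A) (b b' : B) :
    ∑ k, w k * l (r b * a * r b') * v k = b * (∑ k, w k * l a * v k) * b' := by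
  rw [Finset.mul_sum, Finset.sum_mul]
  exact Finset.sum_congr rfl fun k _ => (hv k).mul_map_sandwich_mul (hw k) a b b'

end Intertwiner

theorem stmt_19_general {A B : Type*} [Ring A] [Ring B]
    (l : A →+* B) (r : B →+* A)
    (n : ℕ) (v w : Fin n → B)
    (hv : ∀ k, IsIntertwiner (RingHom.id B) (l.comp r) (v k))
    (hw : ∀ k, IsIntertwiner (l.comp r) (RingHom.id B) (w k))
    (hsum : (∑ k, w k * v k) = 1) :
    (∀ (a : A) (b b' : B),
      (∑ k, w k * l (r b * a * r b') * v k) = b * (∑ k, w k * l a * v k) * b') ∧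
    ((∑ k, w k * l 1 * v k) = 1) ∧
    (∀ b : B, (∑ k, w k * l (r b) * v k) = b) := by
  have bimodule := sum_mul_map_sandwich_mul hv hw
  have unital : ∑ k, w k * l 1 * v k = 1 := by simpa only [map_one, mul_one] using hsum
  refine ⟨bimodule, unital, fun b => ?_⟩
  simpa only [map_one, mul_one, hsum] using bimodule 1 b 1

/-- Let `(m, e) : λ ⊣ ρ` be an adjunction in the 2-category of rings and suppose
`id_B ≤ λ∘ρ`, witnessed by intertwiners `v_k : id_B → λ∘ρ` and `w_k : λ∘ρ → id_B`
with `Σ_k w_k·v_k = 1`. Then `E : A → B`, `E(a) = Σ_k w_k·λ(a)·v_k`, is a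
`B`-`B`-bimodule map with `E(1) = 1`; in particular `E(ρ(b)) = b`, so `ρ` is a
split extension of `B`-`B`-bimodules. -/
theorem stmt_19 {A B : Type*} [Ring A] [Ring B]
    (l : A →+* B) (r : B →+* A) (m : A) (e : B) (h : IsRingAdjunction l r m e)
    (n : ℕ) (v w : Fin n → B)
    (hv : ∀ k, IsIntertwiner (RingHom.id B) (l.comp r) (v k))
    (hw : ∀ k, IsIntertwiner (l.comp r) (RingHom.id B) (w k))
    (hsum : (∑ k, w k * v k) = 1) :
    (∀ (a : A) (b b' : B),
      (∑ k, w k * l (r b * a * r b') * v k) = b * (∑ k, w k * l a * v k) * b') ∧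
    ((∑ k, w k * l 1 * v k) = 1) ∧
    (∀ b : B, (∑ k, w k * l (r b) * v k) = b) :=
  stmt_19_general l r n v w hv hw hsum
end
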